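/- arXiv:0811.0325 — 2 statements merged into one kernel-verified Lean document; each statement's English description precedes it below -/
import Mathlib

section
/- Let x, y, z : ℕ → ℤ → F₂ be families of F₂-valued sequences with x̃_i(t) = Σ_{τ=0}^{i-1} x_{i-τ}(t-τ) and ỹ, z̃ defined analogously. Fix integers t, δx, δy, δz and natural numbers i, j, k with i, j, k ≥ 1. Define C(s) = x̃_i(s-δx-1) + ỹ_{j+1}(s-δy) + z̃_{k-1}(s-δz+1) and D(s) = x̃_{i-1}(s-δx) + ỹ_{j+1}(s-δy-1) + z̃_k(s-δz+1). Then C(t-1) + D(t) = x̃_i(t-δx-2) + x̃_{i-1}(t-δx) + z_k(t-δz+1). -/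
/-- Coded symbol `x̃_i(t) = Σ_{τ=0}^{i-1} x_{i-τ}(t-τ)`; in particular `x̃_0(t) = 0`. -/
def tilde (x : ℕ → ℤ → ZMod 2) (i : ℕ) (t : ℤ) : ZMod 2 :=
  ∑ τ ∈ Finset.range i, x (i - τ) (t - (τ : ℤ))

lemma tilde_succ (x : ℕ → ℤ → ZMod 2) (n : ℕ) (t : ℤ) :
    tilde x (n + 1) t = x (n + 1) t + tilde x n (t - 1) := by
  rw [tilde, Finset.sum_range_succ', add_comm, tilde]
  congr 1
  · simp
  · refine Finset.sum_congr rfl fun τ _ => ?_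
    congr 1
    · omega
    · push_cast; ring

lemma tilde_pred_add_tilde (x : ℕ → ℤ → ZMod 2) {k : ℕ} (hk : 1 ≤ k) (t : ℤ) :
    tilde x (k - 1) (t - 1) + tilde x k t = x k t := by
  obtain ⟨n, rfl⟩ := Nat.exists_eq_add_of_le' hk
  rw [tilde_succ, Nat.add_sub_cancel, add_left_comm, CharTwo.add_self_eq_zero, add_zero]

theorem neighbour_sum_CD_general (x y z : ℕ → ℤ → ZMod 2) (t δx δy δz : ℤ) (i j k : ℕ)
    (hk : 1 ≤ k)
    (C D : ℤ → ZMod 2)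
    (hC : ∀ s, C s =
      tilde x i (s - δx - 1) + tilde y (j + 1) (s - δy) + tilde z (k - 1) (s - δz + 1))
    (hD : ∀ s, D s =
      tilde x (i - 1) (s - δx) + tilde y (j + 1) (s - δy - 1) + tilde z k (s - δz + 1)) :
    C (t - 1) + D t =
      tilde x i (t - δx - 2) + tilde x (i - 1) (t - δx) + z k (t - δz + 1) := by
  calc C (t - 1) + D t
      = tilde x i (t - δx - 2) + tilde x (i - 1) (t - δx)
          + (tilde y (j + 1) (t - δy - 1) + tilde y (j + 1) (t - δy - 1))
          + (tilde z (k - 1) (t - δz + 1 - 1) + tilde z k (t - δz + 1)) := by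
        rw [hC, hD]; ring_nf
    _ = tilde x i (t - δx - 2) + tilde x (i - 1) (t - δx) + z k (t - δz + 1) := by
        rw [CharTwo.add_self_eq_zero, tilde_pred_add_tilde z hk, add_zero]

/-- Combining the transmissions `C(t-1)` and `D(t)` of neighbours `C[P]` and `D[P]`. -/
theorem neighbour_sum_CD (x y z : ℕ → ℤ → ZMod 2) (t δx δy δz : ℤ) (i j k : ℕ)
    (hi : 1 ≤ i) (hj : 1 ≤ j) (hk : 1 ≤ k)
    (C D : ℤ → ZMod 2)
    (hC : ∀ s, C s =
      tilde x i (s - δx - 1) + tilde y (j + 1) (s - δy) + tilde z (k - 1) (s - δz + 1))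
    (hD : ∀ s, D s =
      tilde x (i - 1) (s - δx) + tilde y (j + 1) (s - δy - 1) + tilde z k (s - δz + 1)) :
    C (t - 1) + D t =
      tilde x i (t - δx - 2) + tilde x (i - 1) (t - δx) + z k (t - δz + 1) :=
  neighbour_sum_CD_general x y z t δx δy δz i j k hk C D hC hD
end

section
/- (Claim 1) Let x, y, z : ℕ → ℤ → F₂ be families of F₂-valued sequences with x̃_i(t) = Σ_{τ=0}^{i-1} x_{i-τ}(t-τ) and ỹ, z̃ defined analogously. Fix integers t, δx, δy, δz and natural numbers i, j, k with i, j, k ≥ 1. Define P(s) = x̃_i(s-δx) + ỹ_j(s-δy) + z̃_k(s-δz), A(s) = x̃_{i+1}(s-δx) + ỹ_{j-1}(s-δy+1) + z̃_k(s-δz-1), B(s) = x̃_{i+1}(s-δx-1) + ỹ_j(s-δy+1) + z̃_{k-1}(s-δz), C(s) = x̃_i(s-δx-1) + ỹ_{j+1}(s-δy) + z̃_{k-1}(s-δz+1), D(s) = x̃_{i-1}(s-δx) + ỹ_{j+1}(s-δy-1) + z̃_k(s-δz+1), E(s) = x̃_{i-1}(s-δx+1) + ỹ_j(s-δy-1)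 + z̃_{k+1}(s-δz), F(s) = x̃_i(s-δx+1) + ỹ_{j-1}(s-δy) + z̃_{k+1}(s-δz-1). Then P(t+1) = A(t-1) + B(t) + C(t-1) + D(t) + E(t-1) + F(t) + P(t-2). -/
theorem internal_node_update_general (x y z : ℕ → ℤ → ZMod 2) (t δx δy δz : ℤ) (i j k : ℕ)
    (P A B C D E F : ℤ → ZMod 2)
    (hP : ∀ s, P s =
      tilde x i (s - δx) + tilde y j (s - δy) + tilde z k (s - δz))
    (hA : ∀ s, A s =
      tilde x (i + 1) (s - δx) + tilde y (j - 1) (s - δy + 1) + tilde z k (s - δz - 1))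
    (hB : ∀ s, B s =
      tilde x (i + 1) (s - δx - 1) + tilde y j (s - δy + 1) + tilde z (k - 1) (s - δz))
    (hC : ∀ s, C s =
      tilde x i (s - δx - 1) + tilde y (j + 1) (s - δy) + tilde z (k - 1) (s - δz + 1))
    (hD : ∀ s, D s =
      tilde x (i - 1) (s - δx) + tilde y (j + 1) (s - δy - 1) + tilde z k (s - δz + 1))
    (hE : ∀ s, E s =
      tilde x (i - 1) (s - δx + 1) + tilde y j (s - δy - 1) + tilde z (k + 1) (s - δz))
    (hF : ∀ s, F s =
      tilde x i (s - δx + 1) + tilde y (j - 1) (s - δy) + tilde z (k + 1) (s - δz - 1)) :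
    P (t + 1) =
      A (t - 1) + B t + C (t - 1) + D t + E (t - 1) + F t + P (t - 2) := by
  rw [hP, hA, hB, hC, hD, hE, hF, hP]
  -- Once the time arguments are normalised, every coded term on the right occurs twice, and so
  -- cancels in characteristic 2, except x̃_i(t+1-δx), ỹ_j(t+1-δy) and z̃_k(t+1-δz).
  ring_nf
  reduce_mod_char

/-- Claim 1: an internal node `P` can compute its next transmission `P(t+1)` from
its neighbours' transmissions in the two preceding time slots and `P(t-2)`. -/
theorem internal_node_update (x y z : ℕ → ℤ → ZMod 2) (t δx δy δz : ℤ) (i j k : ℕ)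
    (hi : 1 ≤ i) (hj : 1 ≤ j) (hk : 1 ≤ k)
    (P A B C D E F : ℤ → ZMod 2)
    (hP : ∀ s, P s =
      tilde x i (s - δx) + tilde y j (s - δy) + tilde z k (s - δz))
    (hA : ∀ s, A s =
      tilde x (i + 1) (s - δx) + tilde y (j - 1) (s - δy + 1) + tilde z k (s - δz - 1))
    (hB : ∀ s, B s =
      tilde x (i + 1) (s - δx - 1) + tilde y j (s - δy + 1) + tilde z (k - 1) (s - δz))
    (hC : ∀ s, C s =
      tilde x i (s - δx - 1) + tilde y (j + 1) (s - δy) + tilde z (k - 1) (s - δz + 1))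
    (hD : ∀ s, D s =
      tilde x (i - 1) (s - δx) + tilde y (j + 1) (s - δy - 1) + tilde z k (s - δz + 1))
    (hE : ∀ s, E s =
      tilde x (i - 1) (s - δx + 1) + tilde y j (s - δy - 1) + tilde z (k + 1) (s - δz))
    (hF : ∀ s, F s =
      tilde x i (s - δx + 1) + tilde y (j - 1) (s - δy) + tilde z (k + 1) (s - δz - 1)) :
    P (t + 1) =
      A (t - 1) + B t + C (t - 1) + D t + E (t - 1) + F t + P (t - 2) :=
  internal_node_update_general x y z t δx δy δz i j k P A B C D E F hP hA hB hC hD hE hF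
end
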